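/- (1) The C-type v.Γ ⊢ φ is closed if and only if Γ ⊢ v→φ is closed. (2) The C-type nil ⊢ φ is closed if and only if nil ⊢ ω→φ is closed. (3) If for each 1 ≤ i ≤ m the C-type T_i = Γ^i ⊢ φ_i is closed and the sets TV(T_i) are pairwise disjoint, then for any type variable α not occurring in any T_i and any n ≥ 1, the C-type (ω^{n−1}.(φ1→⋯→φm→α).nil) ∧ Γ^1 ∧ ⋯ ∧ Γ^m ⊢ α is closed. -/
import Mathlib


set_option maxHeartbeats 1000000

namespace DBIT

/-- Terms of the λ_dB-calculus.  `var k` denotes the de Bruijn index `k+1`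
(de Bruijn indices are *positive* natural numbers). -/
inductive Tm : Type
  | var : ℕ → Tm
  | app : Tm → Tm → Tm
  | lam : Tm → Tm
deriving DecidableEq

/-- The set of free indices of a term. -/
def FI : Tm → Finset ℕ
  | .var k => {k + 1}
  | .app M N => FI M ∪ FI N
  | .lam M => ((FI M).filter (fun n => 1 < n)).image (fun n => n - 1)

/-- `supFI M` is the greatest free index of `M` (and `0` if `FI M = ∅`). -/
def supFI (M : Tm) : ℕ := (FI M).sup id

/-- Lift with cut-off: increment all indices that are free under `k` binders. -/
def liftRec (k : ℕ) : Tm → Tm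
  | .var n => if k ≤ n then .var (n + 1) else .var n
  | .app M N => .app (liftRec k M) (liftRec k N)
  | .lam M => .lam (liftRec (k + 1) M)

/-- The lift `M⁺` of `M`: increment all free indices by one. -/
def lift (M : Tm) : Tm := liftRec 0 M

/-- β-substitution: `subst k N M` is `{k+1 / N} M`. -/
def subst (k : ℕ) (N : Tm) : Tm → Tm
  | .app M1 M2 => .app (subst k N M1) (subst k N M2)
  | .lam M1 => .lam (subst (k + 1) (lift N) M1)
  | .var m => if k < m then .var (m - 1) else if m = k then N else .var m

/-- One-step β-reduction: the compatible closure of the β-contraction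
`(λ.M) N →β {1/N} M`. -/
inductive Beta : Tm → Tm → Prop
  | beta (M N : Tm) : Beta (.app (.lam M) N) (subst 0 N M)
  | appL {M M' : Tm} (N : Tm) : Beta M M' → Beta (.app M N) (.app M' N)
  | appR (M : Tm) {N N' : Tm} : Beta N N' → Beta (.app M N) (.app M N')
  | lam {M M' : Tm} : Beta M M' → Beta (.lam M) (.lam M')

/-- A term is a β-normal form when no β-reduction applies to it. -/
def IsNF (M : Tm) : Prop := ∀ N, ¬ Beta M N

/-- `appList h [N1, …, Nm] = (h N1 ⋯ Nm)`. -/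
def appList (h : Tm) (Ns : List Tm) : Tm := Ns.foldl .app h

/-! ### Restricted intersection types -/

mutual
  /-- The set `T` of restricted intersection types: `τ ::= α | u → τ`. -/
  inductive Ty : Type
    | tvar : ℕ → Ty
    | arr : IU → Ty → Ty
  /-- The set `U`: `u ::= ω | u ∧ u | τ`. -/
  inductive IU : Type
    | omega : IU
    | inter : IU → IU → IU
    | ofTy : Ty → IU
end

mutual
  /-- Equality of types in the quotient by commutativity/associativity of `∧`
  and neutrality of `ω`. -/
  inductive TyEq : Ty → Ty → Prop
    | refl (τ) : TyEq τ τ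
    | symm {τ σ} : TyEq τ σ → TyEq σ τ
    | trans {τ σ ρ} : TyEq τ σ → TyEq σ ρ → TyEq τ ρ
    | arr {u v τ σ} : UEq u v → TyEq τ σ → TyEq (.arr u τ) (.arr v σ)
  /-- Equality of `U`-elements in the quotient: `∧` is commutative, associative
  and has `ω` as neutral element. -/
  inductive UEq : IU → IU → Prop
    | refl (u) : UEq u u
    | symm {u v} : UEq u v → UEq v u
    | trans {u v w} : UEq u v → UEq v w → UEq u w
    | comm (u v) : UEq (.inter u v) (.inter v u)
    | assoc (u v w) : UEq (.inter (.inter u v) w) (.inter u (.inter v w))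
    | omega_left (u) : UEq (.inter .omega u) u
    | inter {u u' v v'} : UEq u u' → UEq v v' → UEq (.inter u v) (.inter u' v')
    | ofTy {τ σ} : TyEq τ σ → UEq (.ofTy τ) (.ofTy σ)
end

/-- Contexts: finite lists of elements of `U`. -/
abbrev Ctx := List IU

/-- Equality of contexts in the quotient (componentwise). -/
def CtxEq (Γ Δ : Ctx) : Prop := List.Forall₂ UEq Γ Δ

/-- The extension of `∧` to contexts (with `nil` neutral). -/
def ctxAnd : Ctx → Ctx → Ctx
  | [], Δ => Δ
  | u :: Γ, [] => u :: Γ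
  | u :: Γ, v :: Δ => .inter u v :: ctxAnd Γ Δ

/-- `ω^n`: the context consisting of `n` copies of `ω`. -/
def omegas (n : ℕ) : Ctx := List.replicate n .omega

/-- `arrChain [σ1,…,σm] τ = σ1 → ⋯ → σm → τ`. -/
def arrChain (σs : List Ty) (τ : Ty) : Ty := σs.foldr (fun σ t => .arr (.ofTy σ) t) τ

/-- `interOf [σ1,…,σn] = σ1 ∧ ⋯ ∧ σn` (and `ω` for the empty list). -/
def interOf : List Ty → IU
  | [] => .omega
  | σ :: σs => σs.foldl (fun u τ => .inter u (.ofTy τ)) (.ofTy σ)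

mutual
  /-- Type variables occurring in a type. -/
  def tvT : Ty → Finset ℕ
    | .tvar a => {a}
    | .arr u τ => tvU u ∪ tvT τ
  /-- Type variables occurring in a `U`-element. -/
  def tvU : IU → Finset ℕ
    | .omega => ∅
    | .inter u v => tvU u ∪ tvU v
    | .ofTy τ => tvT τ
end

/-- Type variables occurring in a context. -/
def tvC (Γ : Ctx) : Finset ℕ := Γ.foldr (fun u s => tvU u ∪ s) ∅

mutual
  /-- Application of a type substitution to a type. -/
  def substT (s : ℕ → Ty) : Ty → Ty
    | .tvar a => s a
    | .arr u τ => .arr (substU s u) (substT s τ)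
  /-- Application of a type substitution to a `U`-element. -/
  def substU (s : ℕ → Ty) : IU → IU
    | .omega => .omega
    | .inter u v => .inter (substU s u) (substU s v)
    | .ofTy τ => .ofTy (substT s τ)
end

/-- Application of a type substitution to a context. -/
def substC (s : ℕ → Ty) (Γ : Ctx) : Ctx := Γ.map (substU s)

/-! ### The typing systems SM and SM_r

Since types are quotiented by commutativity/associativity of `∧` and
neutrality of `ω`, the systems include a conversion rule for this
equality of types/contexts. -/

/-- The typing system `SM`.  Recall that `Tm.var k` is the de Bruijn index `k+1`. -/
inductive SM : Tm → Ctx → Ty → Prop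
  | var (τ : Ty) : SM (.var 0) [.ofTy τ] τ
  | varn {k Γ τ} : SM (.var k) Γ τ → SM (.var (k + 1)) (.omega :: Γ) τ
  | arrI {M u Γ τ} : SM M (u :: Γ) τ → SM (.lam M) Γ (.arr u τ)
  | arrI' {M τ} : SM M [] τ → SM (.lam M) [] (.arr .omega τ)
  | arrE' {M1 M2 Γ Δ τ σ} : SM M1 Γ (.arr .omega τ) → SM M2 Δ σ →
      SM (.app M1 M2) (ctxAnd Γ Δ) τ
  | arrE {M1 M2 : Tm} {Γ : Ctx} {τ : Ty} (σs : List Ty) (Δs : List Ctx)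
      (hne : σs ≠ []) (hlen : Δs.length = σs.length)
      (h1 : SM M1 Γ (.arr (interOf σs) τ))
      (h2 : ∀ i, i < σs.length → SM M2 (Δs.getD i []) (σs.getD i (.tvar 0))) :
      SM (.app M1 M2) (Δs.foldl ctxAnd Γ) τ
  | conv {M Γ Γ' τ τ'} : SM M Γ τ → CtxEq Γ Γ' → TyEq τ τ' → SM M Γ' τ'

/-- The typing system `SM_r`: as `SM` but with rule (var) replaced by (var_r). -/
inductive SMr : Tm → Ctx → Ty → Prop
  | varr (σs : List Ty) (a : ℕ) :
      SMr (.var 0) [.ofTy (arrChain σs (.tvar a))] (arrChain σs (.tvar a))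
  | varn {k Γ τ} : SMr (.var k) Γ τ → SMr (.var (k + 1)) (.omega :: Γ) τ
  | arrI {M u Γ τ} : SMr M (u :: Γ) τ → SMr (.lam M) Γ (.arr u τ)
  | arrI' {M τ} : SMr M [] τ → SMr (.lam M) [] (.arr .omega τ)
  | arrE' {M1 M2 Γ Δ τ σ} : SMr M1 Γ (.arr .omega τ) → SMr M2 Δ σ →
      SMr (.app M1 M2) (ctxAnd Γ Δ) τ
  | arrE {M1 M2 : Tm} {Γ : Ctx} {τ : Ty} (σs : List Ty) (Δs : List Ctx)
      (hne : σs ≠ []) (hlen : Δs.length = σs.length)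
      (h1 : SMr M1 Γ (.arr (interOf σs) τ))
      (h2 : ∀ i, i < σs.length → SMr M2 (Δs.getD i []) (σs.getD i (.tvar 0))) :
      SMr (.app M1 M2) (Δs.foldl ctxAnd Γ) τ
  | conv {M Γ Γ' τ τ'} : SMr M Γ τ → CtxEq Γ Γ' → TyEq τ τ' → SMr M Γ' τ'

/-- The type variables of a typing (pair context/type). -/
def tvP (Γ : Ctx) (τ : Ty) : Finset ℕ := tvC Γ ∪ tvT τ

/-- The type-inference algorithm `Infer` for β-normal forms, as a relation
(the algorithm is nondeterministic in the choice of the fresh type variables;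
freshness is expressed by the disjointness side conditions). -/
inductive InferR : Tm → Ctx → Ty → Prop
  | var (k a : ℕ) : InferR (.var k) (omegas k ++ [.ofTy (.tvar a)]) (.tvar a)
  | lamCons {N : Tm} {u : IU} {Γ : Ctx} {σ : Ty} :
      InferR N (u :: Γ) σ → InferR (.lam N) Γ (.arr u σ)
  | lamNil {N : Tm} {σ : Ty} :
      InferR N [] σ → InferR (.lam N) [] (.arr .omega σ)
  | app (k : ℕ) (Ns : List Tm) (Γs : List Ctx) (σs : List Ty) (a : ℕ)
      (hne : Ns ≠ [])
      (hlen1 : Γs.length = Ns.length) (hlen2 : σs.length = Ns.length)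
      (h : ∀ i, i < Ns.length →
        InferR (Ns.getD i (.var 0)) (Γs.getD i []) (σs.getD i (.tvar 0)))
      (hdisj : ∀ i j, i < Ns.length → j < Ns.length → i ≠ j →
        Disjoint (tvP (Γs.getD i []) (σs.getD i (.tvar 0)))
                 (tvP (Γs.getD j []) (σs.getD j (.tvar 0))))
      (ha : ∀ i, i < Ns.length → a ∉ tvP (Γs.getD i []) (σs.getD i (.tvar 0))) :
      InferR (appList (.var k) Ns)
        (Γs.foldl ctxAnd (omegas k ++ [.ofTy (arrChain σs (.tvar a))]))
        (.tvar a)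

/-! ### The subsets T_C, T_NF, U_C and C-types -/

mutual
  /-- `ρ ∈ T_C ::= α | φ→ρ` with `φ ∈ T_NF`. -/
  inductive IsTC : Ty → Prop
    | tvar (a : ℕ) : IsTC (.tvar a)
    | arr {φ ρ} : IsTNF φ → IsTC ρ → IsTC (.arr (.ofTy φ) ρ)
  /-- `φ ∈ T_NF ::= α | v→φ` with `v ∈ U_C`. -/
  inductive IsTNF : Ty → Prop
    | tvar (a : ℕ) : IsTNF (.tvar a)
    | arr {v φ} : IsUC v → IsTNF φ → IsTNF (.arr v φ)
  /-- `v ∈ U_C ::= ω | v∧v | ρ` with `ρ ∈ T_C`. -/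
  inductive IsUC : IU → Prop
    | omega : IsUC .omega
    | inter {u v} : IsUC u → IsUC v → IsUC (.inter u v)
    | ofTy {ρ} : IsTC ρ → IsUC (.ofTy ρ)
end

/-- `Γ ∈ C`: all elements of `Γ` lie in `U_C`. -/
def IsCCtx (Γ : Ctx) : Prop := ∀ u ∈ Γ, IsUC u

/-- C-types: `tj Γ φ` is `Γ ⊢ φ` and `cj Δ` is `Δ ⊢`. -/
inductive CTy : Type
  | tj : Ctx → Ty → CTy
  | cj : Ctx → CTy

mutual
  /-- Number of positive occurrences of the variable `a` in a type. -/
  def posT : Ty → ℕ → ℕ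
    | .tvar b, a => if b = a then 1 else 0
    | .arr u τ, a => negU u a + posT τ a
  /-- Number of negative occurrences of the variable `a` in a type. -/
  def negT : Ty → ℕ → ℕ
    | .tvar _, _ => 0
    | .arr u τ, a => posU u a + negT τ a
  /-- Number of positive occurrences of the variable `a` in a `U`-element. -/
  def posU : IU → ℕ → ℕ
    | .omega, _ => 0
    | .inter u v, a => posU u a + posU v a
    | .ofTy τ, a => posT τ a
  /-- Number of negative occurrences of the variable `a` in a `U`-element. -/
  def negU : IU → ℕ → ℕ
    | .omega, _ => 0
    | .inter u v, a => negU u a + negU v a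
    | .ofTy τ, a => negT τ a
end

/-- Positive occurrences in a context. -/
def posC (Γ : Ctx) (a : ℕ) : ℕ := (Γ.map (fun u => posU u a)).sum
/-- Negative occurrences in a context. -/
def negC (Γ : Ctx) (a : ℕ) : ℕ := (Γ.map (fun u => negU u a)).sum

/-- Positive occurrences of a variable in a C-type (polarity is flipped in the
context part). -/
def posCT : CTy → ℕ → ℕ
  | .tj Γ φ, a => negC Γ a + posT φ a
  | .cj Γ, a => negC Γ a

/-- Negative occurrences of a variable in a C-type. -/
def negCT : CTy → ℕ → ℕ
  | .tj Γ φ, a => posC Γ a + negT φ a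
  | .cj Γ, a => posC Γ a

/-- Type variables of a C-type. -/
def tvCT : CTy → Finset ℕ
  | .tj Γ φ => tvC Γ ∪ tvT φ
  | .cj Γ => tvC Γ

/-- A C-type is closed when each of its type variables has exactly one positive
and exactly one negative occurrence. -/
def IsClosed (T : CTy) : Prop := ∀ a ∈ tvCT T, posCT T a = 1 ∧ negCT T a = 1

/-- The final (rightmost) type-variable occurrence of a type. -/
def finalT : Ty → ℕ
  | .tvar a => a
  | .arr _ φ => finalT φ

/-- The final (rightmost) type-variable occurrence of a `U`-element, if any. -/
def finalU : IU → Option ℕ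
  | .omega => none
  | .inter u v => (finalU v).orElse (fun _ => finalU u)
  | .ofTy τ => some (finalT τ)

/-- Left subtypes of a type. -/
def Lty : Ty → Set IU
  | .tvar _ => ∅
  | .arr .omega φ => Lty φ
  | .arr v φ => insert v (Lty φ)

/-- Left subtypes of a context. -/
def Lctx : Ctx → Set IU
  | [] => ∅
  | .omega :: Γ => Lctx Γ
  | v :: Γ => insert v (Lctx Γ)

/-- The set `L(T)` of left subtypes of a C-type. -/
def LCT : CTy → Set IU
  | .tj Γ φ => Lctx Γ ∪ Lty φ
  | .cj Γ => Lctx Γ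

/-- A C-type `Γ ⊢ φ` is finally closed when the final occurrence of `φ` is
also the final occurrence of some type in `L(T)`. -/
def IsFC : CTy → Prop
  | .tj Γ φ => ∃ v ∈ LCT (.tj Γ φ), finalU v = some (finalT φ)
  | .cj _ => False

/-- Equality of C-types in the quotient. -/
def CTyEq : CTy → CTy → Prop
  | .tj Γ φ, .tj Δ ψ => CtxEq Γ Δ ∧ TyEq φ ψ
  | .cj Γ, .cj Δ => CtxEq Γ Δ
  | _, _ => False

/-- `Γ` contains an element which is not (equal to) `ω`, i.e. `Γ` is not of the
form `ω^n` with `n ≥ 1` (nor `nil`). -/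
def hasNonOmega (Γ : Ctx) : Prop := ∃ u ∈ Γ, ¬ UEq u .omega

/-- `Held T' T`: the C-type `T'` is held in `T = Γ ⊢ φ`, i.e. `T' = Γ' ⊢` or
`T' = Γ' ⊢ φ` with `Γ = Γ' ∧ Δ` for some context `Δ`, where `Γ'` is not of the
form `ω^n` (`Γ'` may be `nil` in the second case). -/
inductive Held : CTy → CTy → Prop
  | cj {Γ' Δ Γ : Ctx} {φ : Ty} (hC : IsCCtx Γ') (hne : Γ' ≠ [])
      (hω : hasNonOmega Γ') (h : CtxEq Γ (ctxAnd Γ' Δ)) :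
      Held (.cj Γ') (.tj Γ φ)
  | tj {Γ' Δ Γ : Ctx} {φ : Ty} (hC : IsCCtx Γ')
      (hω : Γ' = [] ∨ hasNonOmega Γ') (h : CtxEq Γ (ctxAnd Γ' Δ)) :
      Held (.tj Γ' φ) (.tj Γ φ)

/-- `T'` is strictly held in `T`. -/
def StrictlyHeld (T' T : CTy) : Prop := Held T' T ∧ ¬ CTyEq T' T

/-- A C-type is minimally closed when no closed C-type is strictly held in it. -/
def IsMC (T : CTy) : Prop := ¬ ∃ T', StrictlyHeld T' T ∧ IsClosed T'

/-- A C-type is complete when it is closed, finally closed and minimally closed. -/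
def IsComplete (T : CTy) : Prop := IsClosed T ∧ IsFC T ∧ IsMC T

/-- Principal C-types (Definition of principal). -/
inductive Principal : CTy → Prop
  | var (k a : ℕ)
      (hcomp : IsComplete (.tj (omegas k ++ [.ofTy (.tvar a)]) (.tvar a))) :
      Principal (.tj (omegas k ++ [.ofTy (.tvar a)]) (.tvar a))
  | lamNil {φ : Ty} (hcomp : IsComplete (.tj [] (.arr .omega φ)))
      (hp : Principal (.tj [] φ)) :
      Principal (.tj [] (.arr .omega φ))
  | lam {Γ : Ctx} {v : IU} {φ : Ty} (hcomp : IsComplete (.tj Γ (.arr v φ)))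
      (hcond : Γ ≠ [] ∨ ¬ UEq v .omega)
      (hp : Principal (.tj (v :: Γ) φ)) :
      Principal (.tj Γ (.arr v φ))
  | app {Γ : Ctx} {a : ℕ} (k : ℕ) (Γs : List Ctx) (φs : List Ty)
      (hcomp : IsComplete (.tj Γ (.tvar a)))
      (hne : φs ≠ []) (hlen : Γs.length = φs.length)
      (hC : ∀ Δ ∈ Γs, IsCCtx Δ)
      (hΓ : CtxEq Γ (Γs.foldl ctxAnd (omegas k ++ [.ofTy (arrChain φs (.tvar a))])))
      (hp : ∀ i, i < φs.length →
        Principal (.tj (Γs.getD i []) (φs.getD i (.tvar 0)))) :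
      Principal (.tj Γ (.tvar a))

/-- `FO(α, Γ)`: the set of pairs `(i, Γ_i)` (1-indexed) such that `α` is the
final occurrence of `Γ_i`. -/
def FO (a : ℕ) (Γ : Ctx) : Set (ℕ × IU) :=
  {p | 1 ≤ p.1 ∧ p.1 ≤ Γ.length ∧ p.2 = Γ.getD (p.1 - 1) .omega ∧
       finalU p.2 = some a}

/-! ### Auxiliary lemmas for Statement 12 -/

mutual
theorem aux_posT_zero (a : ℕ) : ∀ τ : Ty, a ∉ tvT τ → posT τ a = 0 ∧ negT τ a = 0
  | .tvar b, h => by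
      simp [tvT] at h
      simp [posT, negT, (Ne.symm h : _ ≠ a)]
  | .arr u τ, h => by
      simp [tvT] at h
      have h1 := aux_posU_zero a u h.1
      have h2 := aux_posT_zero a τ h.2
      simp [posT, negT, h1.1, h1.2, h2.1, h2.2]
theorem aux_posU_zero (a : ℕ) : ∀ u : IU, a ∉ tvU u → posU u a = 0 ∧ negU u a = 0
  | .omega, _ => by simp [posU, negU]
  | .inter u v, h => by
      simp [tvU] at h
      have h1 := aux_posU_zero a u h.1
      have h2 := aux_posU_zero a v h.2
      simp [posU, negU, h1.1, h1.2, h2.1, h2.2]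
  | .ofTy τ, h => by
      simp [tvU] at h
      have := aux_posT_zero a τ h
      simp [posU, negU, this.1, this.2]
end

theorem aux_posC_zero (a : ℕ) (Γ : Ctx) (h : a ∉ tvC Γ) :
    posC Γ a = 0 ∧ negC Γ a = 0 := by
  induction Γ with
  | nil => simp [posC, negC]
  | cons u Γ ih =>
      simp [tvC] at h
      have h1 := aux_posU_zero a u h.1
      have h2 := ih (by simpa [tvC] using h.2)
      simp [posC, negC] at h2 ⊢
      simp [h1.1, h1.2, h2.1, h2.2]

theorem aux_tj_zero (a : ℕ) (Γ : Ctx) (φ : Ty) (h : a ∉ tvCT (.tj Γ φ)) :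
    posCT (.tj Γ φ) a = 0 ∧ negCT (.tj Γ φ) a = 0 := by
  simp [tvCT] at h
  have h1 := aux_posC_zero a Γ h.1
  have h2 := aux_posT_zero a φ h.2
  simp [posCT, negCT, h1.1, h1.2, h2.1, h2.2]

theorem aux_posC_ctxAnd (a : ℕ) : ∀ Γ Δ : Ctx,
    posC (ctxAnd Γ Δ) a = posC Γ a + posC Δ a ∧
    negC (ctxAnd Γ Δ) a = negC Γ a + negC Δ a
  | [], Δ => by simp [ctxAnd, posC, negC]
  | u :: Γ, [] => by simp [ctxAnd, posC, negC]
  | u :: Γ, v :: Δ => by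
      have := aux_posC_ctxAnd a Γ Δ
      simp [ctxAnd, posC, negC, posU, negU] at this ⊢
      omega

theorem aux_tvC_ctxAnd (a : ℕ) : ∀ Γ Δ : Ctx,
    (a ∈ tvC (ctxAnd Γ Δ) ↔ a ∈ tvC Γ ∨ a ∈ tvC Δ)
  | [], Δ => by simp [ctxAnd, tvC]
  | u :: Γ, [] => by simp [ctxAnd, tvC]
  | u :: Γ, v :: Δ => by
      have := aux_tvC_ctxAnd a Γ Δ
      simp [ctxAnd, tvC, tvU] at this ⊢
      tauto

theorem aux_omegas (a : ℕ) (k : ℕ) :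
    posC (omegas k) a = 0 ∧ negC (omegas k) a = 0 ∧ a ∉ tvC (omegas k) := by
  induction k with
  | zero => simp [omegas, posC, negC, tvC]
  | succ n ih =>
      simp [omegas, List.replicate_succ, posC, negC, tvC, posU, negU, tvU] at ih ⊢
      exact ih

theorem aux_posC_append (a : ℕ) (Γ Δ : Ctx) :
    posC (Γ ++ Δ) a = posC Γ a + posC Δ a ∧
    negC (Γ ++ Δ) a = negC Γ a + negC Δ a := by
  simp [posC, negC]

theorem aux_tvC_append (a : ℕ) (Γ Δ : Ctx) :
    a ∈ tvC (Γ ++ Δ) ↔ a ∈ tvC Γ ∨ a ∈ tvC Δ := by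
  induction Γ with
  | nil => simp [tvC]
  | cons u Γ ih => simp [tvC] at ih ⊢; tauto

theorem aux_arrChain (a : ℕ) (τ : Ty) : ∀ φs : List Ty,
    posT (arrChain φs τ) a = (φs.map (fun φ => negT φ a)).sum + posT τ a ∧
    negT (arrChain φs τ) a = (φs.map (fun φ => posT φ a)).sum + negT τ a
  | [] => by simp [arrChain]
  | φ :: φs => by
      have := aux_arrChain a τ φs
      simp [arrChain, posT, negT, posU, negU] at this ⊢
      omega

theorem aux_tvT_arrChain (a : ℕ) (τ : Ty) : ∀ φs : List Ty,
    (a ∈ tvT (arrChain φs τ) ↔ (∃ φ ∈ φs, a ∈ tvT φ) ∨ a ∈ tvT τ)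
  | [] => by simp [arrChain]
  | φ :: φs => by
      have := aux_tvT_arrChain a τ φs
      simp only [arrChain, List.foldr_cons, tvT, tvU, Finset.mem_union,
        List.mem_cons] at this ⊢
      rw [this]
      constructor
      · rintro (h | ⟨ψ, hψ, h⟩ | h)
        · exact Or.inl ⟨φ, Or.inl rfl, h⟩
        · exact Or.inl ⟨ψ, Or.inr hψ, h⟩
        · exact Or.inr h
      · rintro (⟨ψ, rfl | hψ, h⟩ | h)
        · exact Or.inl h
        · exact Or.inr (Or.inl ⟨ψ, hψ, h⟩)
        · exact Or.inr (Or.inr h)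

theorem aux_posC_foldl (a : ℕ) (Γs : List Ctx) : ∀ Γ0 : Ctx,
    posC (Γs.foldl ctxAnd Γ0) a = posC Γ0 a + (Γs.map (fun Γ => posC Γ a)).sum ∧
    negC (Γs.foldl ctxAnd Γ0) a = negC Γ0 a + (Γs.map (fun Γ => negC Γ a)).sum := by
  induction Γs with
  | nil => simp
  | cons Γ Γs ih =>
      intro Γ0
      have h1 := aux_posC_ctxAnd a Γ0 Γ
      have h2 := ih (ctxAnd Γ0 Γ)
      simp at h2 ⊢
      omega

theorem aux_tvC_foldl (a : ℕ) (Γs : List Ctx) : ∀ Γ0 : Ctx,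
    (a ∈ tvC (Γs.foldl ctxAnd Γ0) ↔ a ∈ tvC Γ0 ∨ ∃ Γ ∈ Γs, a ∈ tvC Γ) := by
  induction Γs with
  | nil => simp
  | cons Γ Γs ih =>
      intro Γ0
      have h1 := aux_tvC_ctxAnd a Γ0 Γ
      have h2 := ih (ctxAnd Γ0 Γ)
      simp only [List.foldl_cons, List.mem_cons] at h2 ⊢
      rw [h2, h1]
      constructor
      · rintro ((h | h) | ⟨Δ, hΔ, h⟩)
        · exact Or.inl h
        · exact Or.inr ⟨Γ, Or.inl rfl, h⟩
        · exact Or.inr ⟨Δ, Or.inr hΔ, h⟩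
      · rintro (h | ⟨Δ, rfl | hΔ, h⟩)
        · exact Or.inl (Or.inl h)
        · exact Or.inl (Or.inr h)
        · exact Or.inr ⟨Δ, hΔ, h⟩

theorem aux_sum_map_getD {α : Type} (d : α) (f : α → ℕ) : ∀ l : List α,
    (l.map f).sum = ∑ i ∈ Finset.range l.length, f (l.getD i d)
  | [] => by simp
  | x :: l => by
      simp only [List.map_cons, List.sum_cons, List.length_cons]
      rw [Finset.sum_range_succ']
      simp [aux_sum_map_getD d f l, Nat.add_comm]

/-- properties of closed C-types. -/
theorem closed_props :
    (∀ (v : IU) (Γ : Ctx) (φ : Ty), IsUC v → IsCCtx Γ → IsTNF φ →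
      (IsClosed (.tj (v :: Γ) φ) ↔ IsClosed (.tj Γ (.arr v φ)))) ∧
    (∀ φ : Ty, IsTNF φ →
      (IsClosed (.tj ([] : Ctx) φ) ↔ IsClosed (.tj [] (.arr .omega φ)))) ∧
    (∀ (Γs : List Ctx) (φs : List Ty) (a k : ℕ), Γs.length = φs.length →
      (∀ i, i < φs.length →
        IsCCtx (Γs.getD i []) ∧ IsTNF (φs.getD i (.tvar 0))) →
      (∀ i, i < φs.length →
        IsClosed (.tj (Γs.getD i []) (φs.getD i (.tvar 0)))) →
      (∀ i j, i < φs.length → j < φs.length → i ≠ j →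
        Disjoint (tvCT (.tj (Γs.getD i []) (φs.getD i (.tvar 0))))
                 (tvCT (.tj (Γs.getD j []) (φs.getD j (.tvar 0))))) →
      (∀ i, i < φs.length →
        a ∉ tvCT (.tj (Γs.getD i []) (φs.getD i (.tvar 0)))) →
      IsClosed (.tj (Γs.foldl ctxAnd (omegas k ++ [.ofTy (arrChain φs (.tvar a))]))
        (.tvar a))) := by
  refine ⟨?_, ?_, ?_⟩
  · intro v Γ φ _ _ _
    constructor
    · intro h b hb
      have hb' : b ∈ tvCT (.tj (v :: Γ) φ) := by
        simp [tvCT, tvC, tvT] at hb ⊢; tauto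
      have := h b hb'
      simp [posCT, negCT, posC, negC, posT, negT] at this ⊢
      omega
    · intro h b hb
      have hb' : b ∈ tvCT (.tj Γ (.arr v φ)) := by
        simp [tvCT, tvC, tvT] at hb ⊢; tauto
      have := h b hb'
      simp [posCT, negCT, posC, negC, posT, negT] at this ⊢
      omega
  · intro φ _
    constructor
    · intro h b hb
      have hb' : b ∈ tvCT (.tj ([] : Ctx) φ) := by
        simp [tvCT, tvC, tvT, tvU] at hb ⊢; tauto
      have := h b hb'
      simp [posCT, negCT, posC, negC, posT, negT, posU, negU] at this ⊢
      omega
    · intro h b hb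
      have hb' : b ∈ tvCT (.tj ([] : Ctx) (.arr .omega φ)) := by
        simp [tvCT, tvC, tvT, tvU] at hb ⊢; tauto
      have := h b hb'
      simp [posCT, negCT, posC, negC, posT, negT, posU, negU] at this ⊢
      omega
  · intro Γs φs a k hlen hCF hcl hdisj ha
    set m := φs.length with hm
    set σ : Ty := arrChain φs (.tvar a) with hσ
    set Γ0 : Ctx := omegas k ++ [.ofTy σ] with hΓ0
    set T : ℕ → CTy := fun i => CTy.tj (Γs.getD i []) (φs.getD i (.tvar 0)) with hT
    have hkey : ∀ b,
        posCT (.tj (Γs.foldl ctxAnd Γ0) (.tvar a)) b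
          = (∑ i ∈ Finset.range m, posCT (T i) b) + (if a = b then 1 else 0) ∧
        negCT (.tj (Γs.foldl ctxAnd Γ0) (.tvar a)) b
          = (∑ i ∈ Finset.range m, negCT (T i) b) + (if a = b then 1 else 0) := by
      intro b
      have hf := aux_posC_foldl b Γs Γ0
      have hap := aux_posC_append b (omegas k) [.ofTy σ]
      have hom := aux_omegas b k
      have hch := aux_arrChain b (.tvar a) φs
      have hsg : posC [IU.ofTy σ] b = posT σ b ∧ negC [IU.ofTy σ] b = negT σ b := by
        simp [posC, negC, posU, negU]
      have e1 : (Γs.map (fun Γ => posC Γ b)).sum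
          = ∑ i ∈ Finset.range m, posC (Γs.getD i []) b := by
        rw [aux_sum_map_getD ([] : Ctx) _ Γs, hlen]
      have e2 : (Γs.map (fun Γ => negC Γ b)).sum
          = ∑ i ∈ Finset.range m, negC (Γs.getD i []) b := by
        rw [aux_sum_map_getD ([] : Ctx) _ Γs, hlen]
      have e3 : (φs.map (fun φ => posT φ b)).sum
          = ∑ i ∈ Finset.range m, posT (φs.getD i (.tvar 0)) b := by
        rw [aux_sum_map_getD (Ty.tvar 0) _ φs]
      have e4 : (φs.map (fun φ => negT φ b)).sum
          = ∑ i ∈ Finset.range m, negT (φs.getD i (.tvar 0)) b := by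
        rw [aux_sum_map_getD (Ty.tvar 0) _ φs]
      constructor
      · show negC (Γs.foldl ctxAnd Γ0) b + posT (.tvar a) b = _
        rw [hf.2, hap.2, hom.2.1, hsg.2, hch.2, e2, e3]
        simp only [posCT, hT, posT, negT]
        rw [Finset.sum_add_distrib]
        omega
      · show posC (Γs.foldl ctxAnd Γ0) b + negT (.tvar a) b = _
        rw [hf.1, hap.1, hom.1, hsg.1, hch.1, e1, e4]
        simp only [negCT, hT, posT, negT]
        rw [Finset.sum_add_distrib]
        omega
    have hmem : ∀ b, b ∈ tvCT (.tj (Γs.foldl ctxAnd Γ0) (.tvar a)) →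
        b = a ∨ ∃ i < m, b ∈ tvCT (T i) := by
      intro b hb
      simp only [tvCT, Finset.mem_union] at hb
      rcases hb with hb | hb
      · rw [aux_tvC_foldl b Γs Γ0] at hb
        rcases hb with hb | ⟨Γ, hΓ, hb⟩
        · rw [aux_tvC_append] at hb
          rcases hb with hb | hb
          · exact absurd hb (aux_omegas b k).2.2
          · have : b ∈ tvT σ := by simpa [tvC, tvU] using hb
            rw [hσ, aux_tvT_arrChain] at this
            rcases this with ⟨φ, hφ, hb⟩ | hb
            · obtain ⟨i, hi, rfl⟩ := List.mem_iff_getElem.mp hφ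
              refine Or.inr ⟨i, hi, ?_⟩
              have heq : φs.getD i (.tvar 0) = φs[i] := List.getD_eq_getElem φs _ hi
              simp only [hT, tvCT, Finset.mem_union]
              exact Or.inr (heq ▸ hb)
            · simp [tvT] at hb
              exact Or.inl hb
        · obtain ⟨i, hi, rfl⟩ := List.mem_iff_getElem.mp hΓ
          refine Or.inr ⟨i, by omega, ?_⟩
          have heq : Γs.getD i [] = Γs[i] := List.getD_eq_getElem Γs _ hi
          simp only [hT, tvCT, Finset.mem_union]
          exact Or.inl (heq ▸ hb)
      · simp [tvT] at hb
        exact Or.inl hb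
    intro b hb
    rcases hmem b hb with rfl | ⟨i, hi, hbi⟩
    · have hz : ∀ i ∈ Finset.range m, posCT (T i) b = 0 ∧ negCT (T i) b = 0 := by
        intro i hi
        exact aux_tj_zero b _ _ (ha i (Finset.mem_range.mp hi))
      have h1 := (hkey b).1
      have h2 := (hkey b).2
      rw [Finset.sum_eq_zero (fun i hi => (hz i hi).1)] at h1
      rw [Finset.sum_eq_zero (fun i hi => (hz i hi).2)] at h2
      simp at h1 h2
      exact ⟨h1, h2⟩
    · have hba : a ≠ b := fun h => (ha i hi) (h ▸ hbi)
      have hz : ∀ j ∈ Finset.range m, j ≠ i → posCT (T j) b = 0 ∧ negCT (T j) b = 0 := by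
        intro j hj hji
        have hd := hdisj i j hi (Finset.mem_range.mp hj) (Ne.symm hji)
        exact aux_tj_zero b _ _ (Finset.disjoint_left.mp hd hbi)
      have hone := hcl i hi b hbi
      have h1 := (hkey b).1
      have h2 := (hkey b).2
      rw [Finset.sum_eq_single_of_mem i (Finset.mem_range.mpr hi)
        (fun j hj hji => (hz j hj hji).1), hone.1, if_neg hba] at h1
      rw [Finset.sum_eq_single_of_mem i (Finset.mem_range.mpr hi)
        (fun j hj hji => (hz j hj hji).2), hone.2, if_neg hba] at h2
      exact ⟨h1, h2⟩

end DBIT
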